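/- arXiv:1508.05890 — 2 statements merged into one kernel-verified Lean document; each statement's English description precedes it below -/
import Mathlib

section
/- For complex δ with e^δ ≠ 1, integers 0 ≤ n1 ≤ n2, and p ∈ ℕ, the generalized geometric sum ∑_{k=n1}^{n2-1} k^p·e^{δk} equals ∑_{ℓ=0}^{p} [χ_{n1}(p,ℓ)·e^{(n1+ℓ)δ} - χ_{n2}(p,ℓ)·e^{(n2+ℓ)δ}]/(1 - e^δ)^{ℓ+1}, where χ_n(p,ℓ) satisfies χ_n(0,ℓ) = δ_{ℓ,0} and χ_n(p+1,ℓ) = (n+ℓ)·χ_n(p,ℓ) + ℓ·χ_n(p,ℓ-1). -/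
open Complex Finset

/-- The generalized geometric sum coefficients `χ_n(p, ℓ)`. -/
def chi (n : ℕ) : ℕ → ℕ → ℕ
  | 0, ℓ => if ℓ = 0 then 1 else 0
  | p + 1, ℓ => (n + ℓ) * chi n p ℓ + ℓ * chi n p (ℓ - 1)

/-
With `S_p(n)(δ) = ∑_ℓ χ_n(p,ℓ) e^{(n+ℓ)δ} / (1 - e^δ)^{ℓ+1}` the right-hand side is
`S_p(n1) - S_p(n2)`, so the claim telescopes from `S_p(n) - S_p(n+1) = n^p e^{nδ}`.
For `p = 0` this is the geometric-series identity. The recurrence for `χ` says exactly that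
`d/dδ S_p(n) = S_{p+1}(n)`, while `d/dδ (n^p e^{nδ}) = n^{p+1} e^{nδ}`; both sides agree on the
open set `{e^δ ≠ 1}`, so their derivatives do too, which passes the identity from `p` to `p + 1`.
-/

lemma chi_eq_zero_of_lt (n : ℕ) {p ℓ : ℕ} (h : p < ℓ) : chi n p ℓ = 0 := by
  induction p generalizing ℓ with
  | zero => simp [chi, Nat.ne_zero_of_lt h]
  | succ p ih => rw [chi, ih (by omega), ih (by omega), mul_zero, mul_zero, add_zero]

lemma sum_chi_succ_mul {R : Type*} [CommSemiring R] (n p : ℕ) (T : ℕ → R) :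
    ∑ ℓ ∈ range (p + 2), (chi n (p + 1) ℓ : R) * T ℓ =
      ∑ ℓ ∈ range (p + 1), (chi n p ℓ : R) * ((n + ℓ) * T ℓ + (ℓ + 1) * T (ℓ + 1)) := by
  have hdiag : ∑ ℓ ∈ range (p + 2), ((n + ℓ) * chi n p ℓ : R) * T ℓ =
      ∑ ℓ ∈ range (p + 1), ((n + ℓ) * chi n p ℓ : R) * T ℓ := by
    rw [sum_range_succ, chi_eq_zero_of_lt n (Nat.lt_succ_self p), Nat.cast_zero, mul_zero,
      zero_mul, add_zero]
  have hshift : ∑ ℓ ∈ range (p + 2), (ℓ * chi n p (ℓ - 1) : R) * T ℓ =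
      ∑ ℓ ∈ range (p + 1), ((ℓ + 1) * chi n p ℓ : R) * T (ℓ + 1) := by
    rw [sum_range_succ']
    simp
  calc ∑ ℓ ∈ range (p + 2), (chi n (p + 1) ℓ : R) * T ℓ
      = ∑ ℓ ∈ range (p + 2),
          (((n + ℓ) * chi n p ℓ : R) * T ℓ + (ℓ * chi n p (ℓ - 1) : R) * T ℓ) :=
        sum_congr rfl fun ℓ _ => by rw [chi]; push_cast; ring
    _ = ∑ ℓ ∈ range (p + 1),
          (((n + ℓ) * chi n p ℓ : R) * T ℓ + ((ℓ + 1) * chi n p ℓ : R) * T (ℓ + 1)) := by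
        rw [sum_add_distrib, hdiag, hshift, ← sum_add_distrib]
    _ = _ := sum_congr rfl fun ℓ _ => by ring

noncomputable def chiTerm (n ℓ : ℕ) (z : ℂ) : ℂ :=
  exp (((n : ℂ) + ℓ) * z) / (1 - exp z) ^ (ℓ + 1)

noncomputable def chiSum (n p : ℕ) (z : ℂ) : ℂ :=
  ∑ ℓ ∈ range (p + 1), (chi n p ℓ : ℂ) * chiTerm n ℓ z

lemma hasDerivAt_chiTerm (n ℓ : ℕ) {z : ℂ} (hz : exp z ≠ 1) :
    HasDerivAt (chiTerm n ℓ) ((n + ℓ) * chiTerm n ℓ z + (ℓ + 1) * chiTerm n (ℓ + 1) z) z := by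
  have hden : 1 - exp z ≠ 0 := sub_ne_zero.mpr hz.symm
  have hnum := ((hasDerivAt_id z).const_mul ((n : ℂ) + ℓ)).cexp
  have hpow := ((hasDerivAt_exp z).const_sub 1).fun_pow (ℓ + 1)
  refine (hnum.fun_div hpow (pow_ne_zero _ hden)).congr_deriv ?_
  have hexp : exp (((n : ℂ) + ↑(ℓ + 1)) * z) = exp (((n : ℂ) + ℓ) * z) * exp z := by
    rw [← exp_add]; push_cast; ring_nf
  simp only [chiTerm, id, hexp]
  field_simp
  push_cast
  ring

lemma hasDerivAt_chiSum (n p : ℕ) {z : ℂ} (hz : exp z ≠ 1) :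
    HasDerivAt (chiSum n p) (chiSum n (p + 1) z) z := by
  have h := HasDerivAt.fun_sum fun ℓ (_ : ℓ ∈ range (p + 1)) =>
    (hasDerivAt_chiTerm n ℓ hz).const_mul (chi n p ℓ : ℂ)
  rw [chiSum, sum_chi_succ_mul]
  exact h

lemma chiSum_sub_chiSum_succ (n p : ℕ) {z : ℂ} (hz : exp z ≠ 1) :
    chiSum n p z - chiSum (n + 1) p z = (n : ℂ) ^ p * exp (n * z) := by
  induction p generalizing z with
  | zero =>
    have hden : 1 - exp z ≠ 0 := sub_ne_zero.mpr hz.symm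
    have hexp : exp (((n : ℂ) + 1) * z) = exp (n * z) * exp z := by rw [← exp_add]; ring_nf
    simp only [chiSum, chiTerm, chi, zero_add, range_one, sum_singleton, ↓reduceIte, Nat.cast_one,
      one_mul, CharP.cast_eq_zero, add_zero, pow_one, Nat.cast_add, hexp, pow_zero]
    field_simp
  | succ p ih =>
    have hopen : IsOpen {w : ℂ | exp w ≠ 1} := isOpen_ne.preimage continuous_exp
    have hlhs := (hasDerivAt_chiSum n p hz).sub (hasDerivAt_chiSum (n + 1) p hz)
    have hrhs := (((hasDerivAt_id z).const_mul (n : ℂ)).cexp).const_mul ((n : ℂ) ^ p)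
    have heq : (fun w => chiSum n p w - chiSum (n + 1) p w) =ᶠ[nhds z]
        fun w => (n : ℂ) ^ p * exp (n * w) :=
      Filter.eventually_of_mem (hopen.mem_nhds hz) fun w hw => ih hw
    rw [hlhs.unique (hrhs.congr_of_eventuallyEq heq)]
    simp only [id]
    ring

theorem generalized_geometric_sum_formula (δ : ℂ) (hδ : Complex.exp δ ≠ 1)
    (n1 n2 p : ℕ) (h : n1 ≤ n2) :
    ∑ k ∈ Finset.Ico n1 n2, (k : ℂ) ^ p * Complex.exp (δ * k) =
      ∑ ℓ ∈ Finset.range (p + 1),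
        ((chi n1 p ℓ : ℂ) * Complex.exp (((n1 : ℂ) + ℓ) * δ) -
          (chi n2 p ℓ : ℂ) * Complex.exp (((n2 : ℂ) + ℓ) * δ)) /
            (1 - Complex.exp δ) ^ (ℓ + 1) := by
  calc ∑ k ∈ Ico n1 n2, (k : ℂ) ^ p * exp (δ * k)
      = -∑ k ∈ Ico n1 n2, (chiSum (k + 1) p δ - chiSum k p δ) := by
        rw [← sum_neg_distrib]
        exact sum_congr rfl fun k _ => by rw [neg_sub, chiSum_sub_chiSum_succ k p hδ, mul_comm δ]
    _ = chiSum n1 p δ - chiSum n2 p δ := by rw [sum_Ico_sub (fun k => chiSum k p δ) h, neg_sub]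
    _ = _ := by simp only [chiSum, chiTerm, ← sum_sub_distrib, sub_div, mul_div_assoc]
end

section
/- Let A ∈ ℂ^{n×q} have full column rank, b ∈ ℂⁿ, and W ∈ ℂ^{n×m} orthonormal with m ≥ q and WW*A of full column rank. Let x = (A*A)^{-1}A*b and y = (A*WW*A)^{-1}A*WW*b. Then ‖x − y‖₂ ≤ ‖A⁺‖₂‖b‖₂ [sin φ_q(W,A)·sin φ₁(W,b) + tan² φ_q(W,A)·cos φ₁(W,b)], where the subspace angles are defined via singular values of products of orthonormal bases: cos φ_k(W,A) = σ_k(W*U₁) with U₁ the orthonormal range basis of A, sin φ₁(W,b) = ‖(I−WW*)b‖₂/‖b‖₂, cos φ₁(W,b) = ‖W*b‖₂/‖b‖₂, and sin φ_q(W,A) = ‖(I−WW*)U₁‖₂. -/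
open Matrix
open scoped ComplexOrder

/-- The singular values of a matrix: square roots of the eigenvalues of `MᴴM`. -/
noncomputable def singVals {a b : ℕ} (M : Matrix (Fin a) (Fin b) ℂ) : Fin b → ℝ :=
  fun i => Real.sqrt ((Matrix.posSemidef_conjTranspose_mul_self M).1.eigenvalues i)

/-- The Euclidean 2-norm of a vector. -/
noncomputable def vnorm {n : ℕ} (v : Fin n → ℂ) : ℝ :=
  Real.sqrt (∑ i, ‖v i‖ ^ 2)

/-!
With `A = U₁ D Vᴴ`, both solutions factor through `V D⁻¹`: `x = V D⁻¹ U₁ᴴ b` and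
`y = V D⁻¹ G⁻¹ U₁ᴴ P b`, where `P = W Wᴴ` and `G = U₁ᴴ P U₁ = (Wᴴ U₁)ᴴ (Wᴴ U₁)`.
For `M = (1 - P) U₁` one has `Mᴴ M = 1 - G`, hence
`U₁ᴴ - G⁻¹ U₁ᴴ P = Mᴴ (1 - P) - G⁻¹ Mᴴ M U₁ᴴ P`.
The first term has norm at most `‖M‖ ‖(1 - P) b‖` and the second at most
`‖G⁻¹‖ ‖M‖² ‖Wᴴ b‖`, where `‖M‖` is the largest singular value of `M` and
`‖G⁻¹‖ = σ_min(Wᴴ U₁)⁻²`, while `V D⁻¹` contributes the factor `max_i S_i⁻¹`. The singular value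
bounds come from comparing `Mᴴ M` with scalar matrices in the Loewner order.
-/

open scoped MatrixOrder

section HermitianBounds

variable {𝕜 n : Type*} [RCLike 𝕜] [Fintype n] [DecidableEq n] {H : Matrix n n 𝕜}

theorem Matrix.IsHermitian.re_dotProduct_mulVec_le (hH : H.IsHermitian) {t : ℝ}
    (ht : ∀ i, hH.eigenvalues i ≤ t) (v : n → 𝕜) :
    RCLike.re (star v ⬝ᵥ H *ᵥ v) ≤ t * RCLike.re (star v ⬝ᵥ v) := by
  have hle : H ≤ algebraMap ℝ _ t := by
    refine le_algebraMap_of_spectrum_le (fun x hx => ?_) hH.isSelfAdjoint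
    obtain ⟨i, rfl⟩ := hH.spectrum_real_eq_range_eigenvalues ▸ hx
    exact ht i
  simpa [sub_mulVec, Algebra.algebraMap_eq_smul_one, smul_mulVec, RCLike.smul_re] using
    (le_iff.mp hle).re_dotProduct_nonneg v

theorem Matrix.IsHermitian.le_re_dotProduct_mulVec (hH : H.IsHermitian) {t : ℝ}
    (ht : ∀ i, t ≤ hH.eigenvalues i) (v : n → 𝕜) :
    t * RCLike.re (star v ⬝ᵥ v) ≤ RCLike.re (star v ⬝ᵥ H *ᵥ v) := by
  have hle : algebraMap ℝ _ t ≤ H := by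
    refine algebraMap_le_of_le_spectrum (fun x hx => ?_) hH.isSelfAdjoint
    obtain ⟨i, rfl⟩ := hH.spectrum_real_eq_range_eigenvalues ▸ hx
    exact ht i
  simpa [sub_mulVec, Algebra.algebraMap_eq_smul_one, smul_mulVec, RCLike.smul_re] using
    (le_iff.mp hle).re_dotProduct_nonneg v

end HermitianBounds

section Vnorm

variable {a b : ℕ}

theorem vnorm_eq_norm_toLp (v : Fin a → ℂ) : vnorm v = ‖WithLp.toLp 2 v‖ :=
  (EuclideanSpace.norm_eq _).symm

theorem vnorm_nonneg (v : Fin a → ℂ) : 0 ≤ vnorm v := Real.sqrt_nonneg _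

theorem vnorm_eq_zero {v : Fin a → ℂ} : vnorm v = 0 ↔ v = 0 := by
  rw [vnorm_eq_norm_toLp, norm_eq_zero, WithLp.toLp_eq_zero]

theorem vnorm_sub_le (u v : Fin a → ℂ) : vnorm (u - v) ≤ vnorm u + vnorm v := by
  simpa only [vnorm_eq_norm_toLp, WithLp.toLp_sub] using norm_sub_le _ _

theorem star_dotProduct_eq_inner (u v : Fin a → ℂ) :
    star u ⬝ᵥ v = inner ℂ (WithLp.toLp 2 u) (WithLp.toLp 2 v) := by
  rw [EuclideanSpace.inner_eq_star_dotProduct, dotProduct_comm]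

theorem vnorm_sq (v : Fin a → ℂ) : vnorm v ^ 2 = (star v ⬝ᵥ v).re := by
  rw [star_dotProduct_eq_inner, vnorm_eq_norm_toLp, ← inner_self_eq_norm_sq (𝕜 := ℂ)]
  rfl

theorem re_star_dotProduct_le (u v : Fin a → ℂ) : (star u ⬝ᵥ v).re ≤ vnorm u * vnorm v := by
  rw [star_dotProduct_eq_inner, vnorm_eq_norm_toLp, vnorm_eq_norm_toLp]
  exact re_inner_le_norm (𝕜 := ℂ) _ _

theorem vnorm_mulVec_sq (M : Matrix (Fin a) (Fin b) ℂ) (v : Fin b → ℂ) :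
    vnorm (M *ᵥ v) ^ 2 = (star v ⬝ᵥ (Mᴴ * M) *ᵥ v).re := by
  rw [vnorm_sq, star_mulVec, dotProduct_mulVec, vecMul_vecMul, dotProduct_mulVec]

theorem vnorm_mul_div_vnorm (M : Matrix (Fin a) (Fin b) ℂ) (v : Fin b → ℂ) :
    vnorm v * (vnorm (M *ᵥ v) / vnorm v) = vnorm (M *ᵥ v) := by
  rw [← mul_div_assoc]
  exact mul_div_cancel_left_of_imp fun h => by
    rw [vnorm_eq_zero.mp h, mulVec_zero, vnorm_eq_zero]

theorem vnorm_conjTranspose_mulVec_le {M : Matrix (Fin a) (Fin b) ℂ} {t : ℝ} (ht : 0 ≤ t)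
    (hM : ∀ v, vnorm (M *ᵥ v) ≤ t * vnorm v) (w : Fin a → ℂ) :
    vnorm (Mᴴ *ᵥ w) ≤ t * vnorm w := by
  have hsq : vnorm (Mᴴ *ᵥ w) ^ 2 ≤ vnorm (M *ᵥ (Mᴴ *ᵥ w)) * vnorm w := by
    rw [vnorm_sq, star_mulVec, conjTranspose_conjTranspose, ← dotProduct_mulVec, mul_comm]
    exact re_star_dotProduct_le _ _
  have := hM (Mᴴ *ᵥ w)
  nlinarith [vnorm_nonneg (Mᴴ *ᵥ w), vnorm_nonneg w, mul_nonneg ht (vnorm_nonneg w)]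

theorem vnorm_mulVec_of_conjTranspose_mul_self_eq_one {M : Matrix (Fin a) (Fin b) ℂ}
    (hM : Mᴴ * M = 1) (v : Fin b → ℂ) : vnorm (M *ᵥ v) = vnorm v := by
  rw [← sq_eq_sq₀ (vnorm_nonneg _) (vnorm_nonneg _), vnorm_mulVec_sq, hM, one_mulVec, vnorm_sq]

theorem vnorm_conjTranspose_mulVec_le_of_conjTranspose_mul_self_eq_one
    {M : Matrix (Fin a) (Fin b) ℂ} (hM : Mᴴ * M = 1) (w : Fin a → ℂ) :
    vnorm (Mᴴ *ᵥ w) ≤ vnorm w := by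
  simpa using vnorm_conjTranspose_mulVec_le zero_le_one
    (fun v => (vnorm_mulVec_of_conjTranspose_mul_self_eq_one hM v).trans_le (one_mul _).ge) w

theorem vnorm_diagonal_mulVec_le {d : Fin a → ℂ} {t : ℝ} (ht : 0 ≤ t) (hd : ∀ i, ‖d i‖ ≤ t)
    (v : Fin a → ℂ) : vnorm (diagonal d *ᵥ v) ≤ t * vnorm v := by
  rw [← pow_le_pow_iff_left₀ (vnorm_nonneg _) (mul_nonneg ht (vnorm_nonneg v)) two_ne_zero,
    mul_pow, vnorm, vnorm, Real.sq_sqrt (by positivity), Real.sq_sqrt (by positivity),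
    Finset.mul_sum]
  refine Finset.sum_le_sum fun i _ => ?_
  rw [mulVec_diagonal, norm_mul, mul_pow]
  gcongr
  exact hd i

end Vnorm

section SingVals

variable {a b : ℕ} (M : Matrix (Fin a) (Fin b) ℂ)

theorem singVals_nonneg (i : Fin b) : 0 ≤ singVals M i := Real.sqrt_nonneg _

theorem sq_singVals (i : Fin b) :
    singVals M i ^ 2 = (posSemidef_conjTranspose_mul_self M).1.eigenvalues i :=
  Real.sq_sqrt ((posSemidef_conjTranspose_mul_self M).eigenvalues_nonneg i)

theorem singVals_pos (hM : IsUnit (Mᴴ * M).det) (i : Fin b) : 0 < singVals M i :=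
  Real.sqrt_pos.mpr <| ((posSemidef_conjTranspose_mul_self M).posDef_iff_isUnit.mpr
    ((isUnit_iff_isUnit_det _).mpr hM)).eigenvalues_pos i

variable {M}

theorem vnorm_mulVec_le_of_singVals_le {t : ℝ} (ht : 0 ≤ t) (hM : ∀ i, singVals M i ≤ t)
    (v : Fin b → ℂ) : vnorm (M *ᵥ v) ≤ t * vnorm v := by
  rw [← pow_le_pow_iff_left₀ (vnorm_nonneg _) (mul_nonneg ht (vnorm_nonneg v)) two_ne_zero,
    mul_pow, vnorm_mulVec_sq, vnorm_sq]
  refine (posSemidef_conjTranspose_mul_self M).1.re_dotProduct_mulVec_le (fun i => ?_) v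
  rw [← sq_singVals]
  exact pow_le_pow_left₀ (singVals_nonneg M i) (hM i) 2

theorem mul_vnorm_le_vnorm_mulVec_of_le_singVals {c : ℝ} (hc : 0 ≤ c)
    (hM : ∀ i, c ≤ singVals M i) (v : Fin b → ℂ) : c * vnorm v ≤ vnorm (M *ᵥ v) := by
  rw [← pow_le_pow_iff_left₀ (mul_nonneg hc (vnorm_nonneg v)) (vnorm_nonneg _) two_ne_zero,
    mul_pow, vnorm_mulVec_sq, vnorm_sq]
  refine (posSemidef_conjTranspose_mul_self M).1.le_re_dotProduct_mulVec (fun i => ?_) v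
  rw [← sq_singVals]
  exact pow_le_pow_left₀ hc (hM i) 2

theorem sq_mul_vnorm_le_vnorm_gram_mulVec {c : ℝ} (hc : 0 ≤ c) (hM : ∀ i, c ≤ singVals M i)
    (v : Fin b → ℂ) : c ^ 2 * vnorm v ≤ vnorm ((Mᴴ * M) *ᵥ v) := by
  have hlow := mul_vnorm_le_vnorm_mulVec_of_le_singVals hc hM v
  have hsq : vnorm (M *ᵥ v) ^ 2 ≤ vnorm v * vnorm ((Mᴴ * M) *ᵥ v) := by
    rw [vnorm_mulVec_sq]
    exact re_star_dotProduct_le _ _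
  rcases (vnorm_nonneg v).eq_or_lt with hv | hv
  · rw [← hv, mul_zero]
    exact vnorm_nonneg _
  · refine le_of_mul_le_mul_left ?_ hv
    nlinarith [mul_nonneg hc (vnorm_nonneg v)]

theorem vnorm_inv_gram_mulVec_le (hG : IsUnit (Mᴴ * M).det) {c : ℝ} (hc : 0 < c)
    (hM : ∀ i, c ≤ singVals M i) (z : Fin b → ℂ) :
    vnorm ((Mᴴ * M)⁻¹ *ᵥ z) ≤ vnorm z / c ^ 2 := by
  rw [le_div_iff₀ (by positivity), mul_comm]
  simpa [mulVec_mulVec, mul_nonsing_inv _ hG] using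
    sq_mul_vnorm_le_vnorm_gram_mulVec hc.le hM ((Mᴴ * M)⁻¹ *ᵥ z)

end SingVals

theorem conjTranspose_mul_mul_conjTranspose_mul {R n m q : Type*} [CommRing R] [StarRing R]
    [Fintype n] [Fintype m] (U : Matrix n q R) (W : Matrix n m R) :
    Uᴴ * (W * Wᴴ) * U = (Wᴴ * U)ᴴ * (Wᴴ * U) := by
  simp only [conjTranspose_mul, conjTranspose_conjTranspose, Matrix.mul_assoc]

section Projection

variable {R : Type*} [CommRing R] [StarRing R] {n q : Type*} [Fintype n] [DecidableEq n]
  [DecidableEq q] {U : Matrix n q R} {P : Matrix n n R}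

theorem gram_one_sub_mul_of_isIdempotentElem (hP : P.IsHermitian) (hPP : IsIdempotentElem P)
    (hU : Uᴴ * U = 1) : ((1 - P) * U)ᴴ * ((1 - P) * U) = 1 - Uᴴ * P * U := by
  rw [conjTranspose_mul, (isHermitian_one.sub hP).eq, Matrix.mul_assoc,
    ← Matrix.mul_assoc (1 - P), hPP.one_sub.eq, Matrix.sub_mul, Matrix.one_mul, Matrix.mul_sub,
    hU, Matrix.mul_assoc]

variable [Fintype q]

theorem conjTranspose_sub_inv_mul_eq (hP : P.IsHermitian) (hPP : IsIdempotentElem P)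
    (hU : Uᴴ * U = 1) (hG : IsUnit (Uᴴ * P * U).det) :
    Uᴴ - (Uᴴ * P * U)⁻¹ * (Uᴴ * P) =
      ((1 - P) * U)ᴴ * (1 - P) -
        (Uᴴ * P * U)⁻¹ * (((1 - P) * U)ᴴ * ((1 - P) * U)) * (Uᴴ * P) := by
  rw [gram_one_sub_mul_of_isIdempotentElem hP hPP hU, conjTranspose_mul,
    (isHermitian_one.sub hP).eq, Matrix.mul_assoc Uᴴ (1 - P), hPP.one_sub.eq, Matrix.mul_sub,
    Matrix.mul_sub, Matrix.sub_mul, nonsing_inv_mul _ hG]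
  simp only [Matrix.mul_one, Matrix.one_mul]
  abel

end Projection

section LeastSquares

variable {R : Type*} [CommRing R] [StarRing R] {n q : Type*} [Fintype n] [Fintype q]
  {A U : Matrix n q R} {D V : Matrix q q R}

theorem conjTranspose_mul_mul_of_svd (hA : A = U * D * Vᴴ) (Q : Matrix n n R) :
    Aᴴ * Q * A = V * (Dᴴ * (Uᴴ * Q * U) * D) * Vᴴ := by
  subst hA
  simp only [conjTranspose_mul, conjTranspose_conjTranspose, Matrix.mul_assoc]

variable [DecidableEq q]

theorem isUnit_det_conjTranspose_mul_mul_of_svd (hA : A = U * D * Vᴴ) {Q : Matrix n n R}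
    (h : IsUnit (Aᴴ * Q * A).det) : IsUnit (Uᴴ * Q * U).det := by
  simp only [conjTranspose_mul_mul_of_svd hA, det_mul, IsUnit.mul_iff] at h
  exact h.1.2.1.2

theorem inv_mul_conjTranspose_mul_of_svd (hA : A = U * D * Vᴴ) (hV : Vᴴ * V = 1)
    (hD : IsUnit D.det) (Q : Matrix n n R) :
    (Aᴴ * Q * A)⁻¹ * (Aᴴ * Q) = V * D⁻¹ * (Uᴴ * Q * U)⁻¹ * (Uᴴ * Q) := by
  have hDH : Dᴴ⁻¹ * Dᴴ = 1 := nonsing_inv_mul _ (by rw [det_conjTranspose]; exact hD.star)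
  rw [conjTranspose_mul_mul_of_svd hA, Matrix.mul_inv_rev, Matrix.mul_inv_rev,
    Matrix.mul_inv_rev, Matrix.mul_inv_rev, inv_eq_left_inv hV,
    inv_eq_left_inv (mul_eq_one_comm.mp hV)]
  subst hA
  simp only [conjTranspose_mul, conjTranspose_conjTranspose, Matrix.mul_assoc]
  rw [← Matrix.mul_assoc Vᴴ V, hV, Matrix.one_mul, ← Matrix.mul_assoc Dᴴ⁻¹ Dᴴ, hDH,
    Matrix.one_mul]

variable [DecidableEq n]

theorem lsq_sub_projected_lsq_of_svd (hA : A = U * D * Vᴴ) (hV : Vᴴ * V = 1)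
    (hD : IsUnit D.det) (hU : Uᴴ * U = 1) (P : Matrix n n R) :
    (Aᴴ * A)⁻¹ * Aᴴ - (Aᴴ * P * A)⁻¹ * (Aᴴ * P) =
      V * D⁻¹ * (Uᴴ - (Uᴴ * P * U)⁻¹ * (Uᴴ * P)) := by
  have hx := inv_mul_conjTranspose_mul_of_svd hA hV hD 1
  simp only [Matrix.mul_one, hU, inv_one] at hx
  rw [hx, inv_mul_conjTranspose_mul_of_svd hA hV hD P]
  simp only [Matrix.mul_sub, Matrix.mul_assoc]

end LeastSquares

theorem vnorm_conjTranspose_sub_projected_mulVec_le {n m q : ℕ} {U : Matrix (Fin n) (Fin q) ℂ}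
    {W : Matrix (Fin n) (Fin m) ℂ} (hU : Uᴴ * U = 1) (hW : Wᴴ * W = 1)
    (hG : IsUnit ((Wᴴ * U)ᴴ * (Wᴴ * U)).det) {σ c : ℝ} (hσ0 : 0 ≤ σ)
    (hσ : ∀ i, singVals ((1 - W * Wᴴ) * U) i ≤ σ) (hc0 : 0 < c)
    (hc : ∀ i, c ≤ singVals (Wᴴ * U) i) (b : Fin n → ℂ) :
    vnorm ((Uᴴ - ((Wᴴ * U)ᴴ * (Wᴴ * U))⁻¹ * (Uᴴ * (W * Wᴴ))) *ᵥ b) ≤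
      σ * vnorm ((1 - W * Wᴴ) *ᵥ b) + (σ / c) ^ 2 * vnorm (Wᴴ *ᵥ b) := by
  set M := (1 - W * Wᴴ) * U with hMdef
  have hPP : IsIdempotentElem (W * Wᴴ) := by
    rw [IsIdempotentElem, Matrix.mul_assoc, ← Matrix.mul_assoc Wᴴ, hW, Matrix.one_mul]
  have hM : ∀ v, vnorm (M *ᵥ v) ≤ σ * vnorm v := vnorm_mulVec_le_of_singVals_le hσ0 hσ
  have hMH := vnorm_conjTranspose_mulVec_le hσ0 hM
  have hw : vnorm ((Uᴴ * (W * Wᴴ)) *ᵥ b) ≤ vnorm (Wᴴ *ᵥ b) := by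
    rw [← mulVec_mulVec, ← mulVec_mulVec]
    exact (vnorm_conjTranspose_mulVec_le_of_conjTranspose_mul_self_eq_one hU _).trans_eq
      (vnorm_mulVec_of_conjTranspose_mul_self_eq_one hW _)
  have hM2 : vnorm ((Mᴴ * M) *ᵥ ((Uᴴ * (W * Wᴴ)) *ᵥ b)) ≤ σ ^ 2 * vnorm (Wᴴ *ᵥ b) :=
    calc _ ≤ σ * (σ * vnorm ((Uᴴ * (W * Wᴴ)) *ᵥ b)) := by
          rw [← mulVec_mulVec]
          exact (hMH _).trans (by gcongr; exact hM _)
      _ ≤ σ ^ 2 * vnorm (Wᴴ *ᵥ b) := by rw [← mul_assoc, ← sq]; gcongr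
  rw [← conjTranspose_mul_mul_conjTranspose_mul,
    conjTranspose_sub_inv_mul_eq (isHermitian_mul_conjTranspose_self W) hPP hU
      (conjTranspose_mul_mul_conjTranspose_mul U W ▸ hG),
    conjTranspose_mul_mul_conjTranspose_mul, ← hMdef, Matrix.sub_mulVec]
  refine (vnorm_sub_le _ _).trans (add_le_add (by rw [← mulVec_mulVec]; exact hMH _) ?_)
  rw [← mulVec_mulVec, ← mulVec_mulVec]
  refine (vnorm_inv_gram_mulVec_le hG hc0 hc _).trans ?_
  rw [div_pow, div_mul_eq_mul_div]
  gcongr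

theorem projected_ls_solution_bound_general (n m q : ℕ)
    (A U₁ : Matrix (Fin n) (Fin q) ℂ) (S : Fin q → ℝ)
    (V : Matrix (Fin q) (Fin q) ℂ) (W : Matrix (Fin n) (Fin m) ℂ) (b : Fin n → ℂ)
    (hU₁ : U₁ᴴ * U₁ = 1) (hS : ∀ i, 0 < S i) (hV : Vᴴ * V = 1)
    (hSVD : A = U₁ * Matrix.diagonal (fun i => (S i : ℂ)) * Vᴴ)
    (hW : Wᴴ * W = 1)
    (hAWA : IsUnit (Aᴴ * W * Wᴴ * A).det)
    (x y : Fin q → ℂ)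
    (hx : x = ((Aᴴ * A)⁻¹ * Aᴴ).mulVec b)
    (hy : y = ((Aᴴ * W * Wᴴ * A)⁻¹ * Aᴴ * W * Wᴴ).mulVec b) :
    vnorm (x - y) ≤
      (⨆ i, (S i)⁻¹) * vnorm b *
        ((⨆ i, singVals ((1 - W * Wᴴ) * U₁) i) *
            (vnorm ((1 - W * Wᴴ).mulVec b) / vnorm b) +
          ((⨆ i, singVals ((1 - W * Wᴴ) * U₁) i) /
              (⨅ i, singVals (Wᴴ * U₁) i)) ^ 2 *
            (vnorm (Wᴴ.mulVec b) / vnorm b)) := by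
  rcases isEmpty_or_nonempty (Fin q) with hq | hq
  · simp [vnorm, Real.iSup_of_isEmpty]
  set σ := ⨆ i, singVals ((1 - W * Wᴴ) * U₁) i
  set c := ⨅ i, singVals (Wᴴ * U₁) i
  set α := ⨆ i, (S i)⁻¹
  have hDinv : (diagonal fun i => ((S i)⁻¹ : ℂ)) * diagonal (fun i => (S i : ℂ)) = 1 := by
    rw [diagonal_mul_diagonal, ← diagonal_one]
    exact congrArg diagonal (funext fun i => inv_mul_cancel₀ (by exact_mod_cast (hS i).ne'))
  have hG : IsUnit ((Wᴴ * U₁)ᴴ * (Wᴴ * U₁)).det := by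
    rw [← conjTranspose_mul_mul_conjTranspose_mul]
    refine isUnit_det_conjTranspose_mul_mul_of_svd hSVD ?_
    simpa only [Matrix.mul_assoc] using hAWA
  have hc0 : 0 < c := by
    obtain ⟨i, hi⟩ := exists_eq_ciInf_of_finite (f := singVals (Wᴴ * U₁))
    exact (singVals_pos _ hG i).trans_eq hi
  have hα0 : 0 ≤ α := Real.iSup_nonneg fun i => (inv_pos.2 (hS i)).le
  have hα : ∀ i, ‖((S i)⁻¹ : ℂ)‖ ≤ α := fun i => by
    rw [← Complex.ofReal_inv, Complex.norm_real, Real.norm_of_nonneg (inv_pos.2 (hS i)).le]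
    exact le_ciSup (f := fun i => (S i)⁻¹) (Finite.bddAbove_range _) i
  have hxy : x - y = (V * diagonal fun i => ((S i)⁻¹ : ℂ)) *ᵥ
      ((U₁ᴴ - ((Wᴴ * U₁)ᴴ * (Wᴴ * U₁))⁻¹ * (U₁ᴴ * (W * Wᴴ))) *ᵥ b) := by
    rw [hx, hy, ← inv_eq_left_inv hDinv, ← conjTranspose_mul_mul_conjTranspose_mul,
      mulVec_mulVec,
      ← lsq_sub_projected_lsq_of_svd hSVD hV (isUnit_det_of_left_inverse hDinv) hU₁, sub_mulVec]
    simp only [Matrix.mul_assoc]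
  calc vnorm (x - y)
      ≤ α * vnorm ((U₁ᴴ - ((Wᴴ * U₁)ᴴ * (Wᴴ * U₁))⁻¹ * (U₁ᴴ * (W * Wᴴ))) *ᵥ b) := by
        rw [hxy, ← mulVec_mulVec, vnorm_mulVec_of_conjTranspose_mul_self_eq_one hV]
        exact vnorm_diagonal_mulVec_le hα0 hα _
    _ ≤ α * (σ * vnorm ((1 - W * Wᴴ) *ᵥ b) + (σ / c) ^ 2 * vnorm (Wᴴ *ᵥ b)) := by
        gcongr
        exact vnorm_conjTranspose_sub_projected_mulVec_le hU₁ hW hG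
          (Real.iSup_nonneg (singVals_nonneg _)) (le_ciSup (Finite.bddAbove_range _)) hc0
          (ciInf_le (Finite.bddBelow_range _)) b
    _ = _ := by
        linear_combination (-α * σ) * vnorm_mul_div_vnorm (1 - W * Wᴴ) b -
          (α * (σ / c) ^ 2) * vnorm_mul_div_vnorm Wᴴ b

theorem projected_ls_solution_bound (n m q : ℕ) (hqm : q ≤ m) (hmn : m ≤ n)
    (A U₁ : Matrix (Fin n) (Fin q) ℂ) (S : Fin q → ℝ)
    (V : Matrix (Fin q) (Fin q) ℂ) (W : Matrix (Fin n) (Fin m) ℂ) (b : Fin n → ℂ)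
    (hb : b ≠ 0)
    (hU₁ : U₁ᴴ * U₁ = 1) (hS : ∀ i, 0 < S i) (hV : Vᴴ * V = 1) (hV' : V * Vᴴ = 1)
    (hSVD : A = U₁ * Matrix.diagonal (fun i => (S i : ℂ)) * Vᴴ)
    (hW : Wᴴ * W = 1)
    (hAA : IsUnit (Aᴴ * A).det) (hAWA : IsUnit (Aᴴ * W * Wᴴ * A).det)
    (x y : Fin q → ℂ)
    (hx : x = ((Aᴴ * A)⁻¹ * Aᴴ).mulVec b)
    (hy : y = ((Aᴴ * W * Wᴴ * A)⁻¹ * Aᴴ * W * Wᴴ).mulVec b) :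
    vnorm (x - y) ≤
      (⨆ i, (S i)⁻¹) * vnorm b *
        ((⨆ i, singVals ((1 - W * Wᴴ) * U₁) i) *
            (vnorm ((1 - W * Wᴴ).mulVec b) / vnorm b) +
          ((⨆ i, singVals ((1 - W * Wᴴ) * U₁) i) /
              (⨅ i, singVals (Wᴴ * U₁) i)) ^ 2 *
            (vnorm (Wᴴ.mulVec b) / vnorm b)) :=
  projected_ls_solution_bound_general n m q A U₁ S V W b hU₁ hS hV hSVD hW hAWA x y hx hy
end
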